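/- arXiv:2402.09496 — 5 statements merged into one kernel-verified Lean document; each statement's English description precedes it below -/
import Mathlib

section
/- Let P be a poset with |P| > 2 and T a tolerance on P whose blocks all have exactly two elements (a 2-uniform tolerance). Then every element a of P has at most one lower T-neighbor, i.e., there is at most one element c with c covered by a and (c,a) ∈ T. -/
variable {P : Type*} [PartialOrder P]

/-- A tolerance on a poset: reflexive, symmetric, compatible with existing binary
joins and meets, and satisfying the two interpolation conditions (3) and (4). -/
def PosetTolerance (T : P → P → Prop) : Prop :=
  (∀ x, T x x) ∧ (∀ x y, T x y → T y x) ∧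
  (∀ ⦃x y z u j k : P⦄, T x y → T z u → IsLUB {x, z} j → IsLUB {y, u} k → T j k) ∧
  (∀ ⦃x y z u j k : P⦄, T x y → T z u → IsGLB {x, z} j → IsGLB {y, u} k → T j k) ∧
  ((∃ a b, ¬ T a b) → ∀ ⦃x y z : P⦄, T x y → T y z →
    ∃ u v, u ≤ x ∧ u ≤ y ∧ u ≤ z ∧ x ≤ v ∧ y ≤ v ∧ z ≤ v ∧ T u y ∧ T y v) ∧
  ((∃ a b, ¬ T a b) → ∀ ⦃x y : P⦄, T x y →
    ∃ z u, T z u ∧ z ≤ x ∧ z ≤ y ∧ x ≤ u ∧ y ≤ u ∧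
      ∀ v, T v x → T v y → T v z ∧ T v u)

/-- A block of `T`: a maximal subset `B` with `B × B ⊆ T`. -/
def IsBlock (T : P → P → Prop) (B : Set P) : Prop :=
  (∀ x ∈ B, ∀ y ∈ B, T x y) ∧ ∀ C : Set P, B ⊆ C → (∀ x ∈ C, ∀ y ∈ C, T x y) → C = B

/-- A 2-uniform tolerance: a tolerance all of whose blocks have exactly two elements. -/
def TwoUniform (T : P → P → Prop) : Prop :=
  PosetTolerance T ∧ ∀ B : Set P, IsBlock T B → ∃ a b : P, a ≠ b ∧ B = {a, b}

/-- `a` is a lower `T`-neighbor of `b` (and `b` an upper `T`-neighbor of `a`). -/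
def LowerNbr (T : P → P → Prop) (a b : P) : Prop := a ⋖ b ∧ T a b

/-- A `(T,S)`-top: an element with a lower `T`-neighbor and a lower `S`-neighbor
(equivalently, split or adherent `(T,S)`-top). -/
def TSTop (T S : P → P → Prop) (a : P) : Prop :=
  (∃ b, LowerNbr T b a) ∧ ∃ c, LowerNbr S c a

/-- A `(T,S)`-bottom, dually. -/
def TSBottom (T S : P → P → Prop) (a : P) : Prop :=
  (∃ b, LowerNbr T a b) ∧ ∃ c, LowerNbr S a c

/-- `T` and `S` permute: `T ∘ S = S ∘ T`. -/
def Permute (T S : P → P → Prop) : Prop :=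
  ∀ a b : P, (∃ c, T a c ∧ S c b) ↔ (∃ c, S a c ∧ T c b)

/-- Conditions (5)–(8): `T` and `S` are amicable. -/
def Amicable (T S : P → P → Prop) : Prop :=
  (∀ a b : P, a ≠ b → (∃ c, LowerNbr T c a ∧ LowerNbr S c b) →
    ∃ d, LowerNbr S a d ∧ LowerNbr T b d) ∧
  (∀ a b : P, a ≠ b → (∃ c, LowerNbr T a c ∧ LowerNbr S b c) →
    ∃ d, LowerNbr S d a ∧ LowerNbr T d b) ∧
  (∀ a b : P, TSTop T S a → (LowerNbr T a b ∨ LowerNbr S a b) → TSTop T S b) ∧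
  (∀ a b : P, TSBottom T S a → (LowerNbr T b a ∨ LowerNbr S b a) → TSBottom T S b)


private lemma clique_extend {P : Type*} [PartialOrder P] (T : P → P → Prop)
    (S : Set P) (hS : ∀ x ∈ S, ∀ y ∈ S, T x y) :
    ∃ B, S ⊆ B ∧ IsBlock T B := by
  obtain ⟨m, hSm, hm⟩ := zorn_subset_nonempty
    {C : Set P | ∀ x ∈ C, ∀ y ∈ C, T x y}
    (fun c hc hchain _ => ⟨⋃₀ c, by
      rintro x ⟨Cx, hCx, hxCx⟩ y ⟨Cy, hCy, hyCy⟩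
      rcases hchain.total hCx hCy with h | h
      · exact hc hCy x (h hxCx) y hyCy
      · exact hc hCx x hxCx y (h hyCy), fun s hs => Set.subset_sUnion_of_mem hs⟩)
    S hS
  exact ⟨m, hSm, hm.1, fun C hmC hC => (hm.eq_of_le hC hmC).symm⟩

/-- Lemma 1(i), lower part: in a poset with more than two elements, every element
has at most one lower `T`-neighbor for a 2-uniform tolerance `T`. -/
theorem stmt_0 {P : Type*} [PartialOrder P] (T : P → P → Prop)
    (hP : ∃ x y z : P, x ≠ y ∧ x ≠ z ∧ y ≠ z) (hT : TwoUniform T)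
    (a c d : P) (hc : LowerNbr T c a) (hd : LowerNbr T d a) : c = d := by
  obtain ⟨⟨hrefl, hsymm, _, hmeet, _, _⟩, hBlk⟩ := hT
  obtain ⟨hca, hTca⟩ := hc
  obtain ⟨hda, hTda⟩ := hd
  by_contra hcd
  have hTad : T a d := hsymm _ _ hTda
  have h1 : IsGLB ({c, a} : Set P) c :=
    ⟨by rintro x (rfl | rfl); exacts [le_rfl, hca.le], fun w hw => hw (by simp)⟩
  have h2 : IsGLB ({a, d} : Set P) d :=
    ⟨by rintro x (rfl | rfl); exacts [hda.le, le_rfl], fun w hw => hw (by simp)⟩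
  have hTcd : T c d := hmeet hTca hTad h1 h2
  obtain ⟨B, hSB, hB⟩ := clique_extend T {a, c, d} (by
    rintro x (rfl | rfl | rfl) y (rfl | rfl | rfl) <;>
      first
        | exact hrefl _
        | exact hTca | exact hTda | exact hTcd
        | exact hsymm _ _ hTca | exact hsymm _ _ hTda | exact hsymm _ _ hTcd)
  obtain ⟨x, y, hxy, hBxy⟩ := hBlk B hB
  have ha : a ∈ ({x, y} : Set P) := hBxy ▸ hSB (by simp)
  have hcm : c ∈ ({x, y} : Set P) := hBxy ▸ hSB (by simp)
  have hdm : d ∈ ({x, y} : Set P) := hBxy ▸ hSB (by simp)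
  have hac : c ≠ a := hca.lt.ne
  have had : d ≠ a := hda.lt.ne
  simp only [Set.mem_insert_iff, Set.mem_singleton_iff] at ha hcm hdm
  rcases hcm with rfl | rfl <;> rcases hdm with rfl | rfl <;> rcases ha with rfl | rfl <;>
    first | exact hcd rfl | exact hac rfl | exact had rfl
end

section
/- Let P be a poset with |P| > 2 and T a tolerance on P whose blocks all have exactly two elements (a 2-uniform tolerance). Then every element a of P has at most one upper T-neighbor. -/
variable {P : Type*} [PartialOrder P]

omit [PartialOrder P] in
lemma exists_block_of_clique (T : P → P → Prop) {A : Set P}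
    (hA : ∀ x ∈ A, ∀ y ∈ A, T x y) : ∃ B : Set P, IsBlock T B ∧ A ⊆ B := by
  obtain ⟨m, hAm, hm⟩ := zorn_subset_nonempty {C : Set P | ∀ x ∈ C, ∀ y ∈ C, T x y}
    (fun c hcS hchain _ => ⟨⋃₀ c, by
      rintro x ⟨s, hs, hxs⟩ y ⟨t, ht, hyt⟩
      rcases hchain.total hs ht with h | h
      · exact hcS ht x (h hxs) y hyt
      · exact hcS hs x hxs y (h hyt), fun s hs => Set.subset_sUnion_of_mem hs⟩)
    A hA
  exact ⟨m, ⟨hm.prop, fun C hmC hC => (hm.2 hC hmC).antisymm hmC⟩, hAm⟩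

lemma isLUB_pair_of_le {a c : P} (h : a ≤ c) : IsLUB ({a, c} : Set P) c := by
  constructor
  · rintro x (rfl | rfl) <;> simp [h]
  · exact fun b hb => hb (by simp)

lemma isLUB_pair_of_ge {a c : P} (h : a ≤ c) : IsLUB ({c, a} : Set P) c := by
  rw [Set.pair_comm]; exact isLUB_pair_of_le h

/-- Lemma 1(i), upper part: every element has at most one upper `T`-neighbor. -/
theorem stmt_1 {P : Type*} [PartialOrder P] (T : P → P → Prop)
    (hP : ∃ x y z : P, x ≠ y ∧ x ≠ z ∧ y ≠ z) (hT : TwoUniform T)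
    (a c d : P) (hc : LowerNbr T a c) (hd : LowerNbr T a d) : c = d := by
  obtain ⟨⟨hrefl, hsym, hjoin, _hmeet, h3, _h4⟩, hBlk⟩ := hT
  -- T is not the full relation
  have hne : ∃ a b : P, ¬ T a b := by
    by_contra h
    push_neg at h
    obtain ⟨x, y, hxy, huniv⟩ := hBlk Set.univ
      ⟨fun x _ y _ => h x y, fun C hsub _ => (Set.subset_univ C).antisymm hsub⟩
    have hall : ∀ w : P, w = x ∨ w = y := fun w => by
      have : w ∈ ({x, y} : Set P) := huniv ▸ Set.mem_univ w
      simpa using this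
    obtain ⟨p, q, r, hpq, hpr, hqr⟩ := hP
    rcases hall p with hp | hp <;> rcases hall q with hq | hq <;>
      rcases hall r with hr | hr <;> simp_all
  obtain ⟨u, v, _huc, _hua, _hud, hcv, hav, hdv, _hTua, hTav⟩ :=
    h3 hne (hsym _ _ hc.2) hd.2
  have hav' : a ≠ v := fun h => (lt_of_lt_of_le hc.1.lt hcv).ne (h ▸ rfl)
  -- key step: any m with a ≤ m ≤ v and T a m lies in a 3-clique {a, m, v}, so m = v
  have key : ∀ m : P, a ⋖ m → T a m → m ≤ v → m = v := by
    intro m hm hTm hmv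
    have hTmv : T m v := hjoin hTav (hrefl m) (isLUB_pair_of_le hm.le)
      (isLUB_pair_of_ge hmv)
    have hclique : ∀ x ∈ ({a, m, v} : Set P), ∀ y ∈ ({a, m, v} : Set P), T x y := by
      rintro x (rfl | rfl | rfl) y (rfl | rfl | rfl) <;>
        first
          | exact hrefl _
          | exact hTm | exact hsym _ _ hTm
          | exact hTav | exact hsym _ _ hTav
          | exact hTmv | exact hsym _ _ hTmv
    obtain ⟨B, hB, hsub⟩ := exists_block_of_clique T hclique
    obtain ⟨x, y, hxy, hBxy⟩ := hBlk B hB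
    have ha : a ∈ ({x, y} : Set P) := hBxy ▸ hsub (by simp)
    have hm' : m ∈ ({x, y} : Set P) := hBxy ▸ hsub (by simp)
    have hv : v ∈ ({x, y} : Set P) := hBxy ▸ hsub (by simp)
    have ham : a ≠ m := hm.lt.ne
    simp only [Set.mem_insert_iff, Set.mem_singleton_iff] at ha hm' hv
    rcases ha with rfl | rfl <;> rcases hm' with rfl | rfl <;>
      rcases hv with rfl | rfl <;>
      first
        | rfl
        | exact absurd rfl ham
        | exact absurd rfl hav'
  rw [key c hc.1 hc.2 hcv, key d hd.1 hd.2 hdv]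
end

section
/- Let T and S be 2-uniform tolerances on a poset P (|P| > 2) that permute, i.e., T∘S = S∘T as relations. If a ≠ b and some element c is both a lower T-neighbor of a and a lower S-neighbor of b, then there exists an element d that is an upper S-neighbor of a and an upper T-neighbor of b. -/
variable {P : Type*} [PartialOrder P]

private lemma tol_not_all {T : P → P → Prop} (hT : TwoUniform T)
    (hP : ∃ x y z : P, x ≠ y ∧ x ≠ z ∧ y ≠ z) : ∃ a b, ¬ T a b := by
  by_contra h
  push_neg at h
  have hblock : IsBlock T (Set.univ : Set P) :=
    ⟨fun x _ y _ => h x y, fun C hC _ => Set.eq_univ_of_univ_subset hC⟩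
  obtain ⟨p, q, hpq, hU⟩ := hT.2 _ hblock
  obtain ⟨x, y, z, hxy, hxz, hyz⟩ := hP
  have hx : x ∈ ({p, q} : Set P) := hU ▸ Set.mem_univ x
  have hy : y ∈ ({p, q} : Set P) := hU ▸ Set.mem_univ y
  have hz : z ∈ ({p, q} : Set P) := hU ▸ Set.mem_univ z
  simp only [Set.mem_insert_iff, Set.mem_singleton_iff] at hx hy hz
  rcases hx with rfl | rfl <;> rcases hy with rfl | rfl <;> rcases hz with rfl | rfl <;>
    simp_all

private lemma pair_block {T : P → P → Prop} (hT : TwoUniform T) {x y : P}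
    (hxy : x ≠ y) (h : T x y) :
    ∀ C : Set P, ({x, y} : Set P) ⊆ C → (∀ a ∈ C, ∀ b ∈ C, T a b) → C = {x, y} := by
  intro C hsub hcl
  have hsym := hT.1.2.1
  have hrefl := hT.1.1
  obtain ⟨B, hCB, hBmax⟩ :=
    zorn_subset_nonempty {D : Set P | ∀ a ∈ D, ∀ b ∈ D, T a b}
      (fun ch hchS hch _ => by
        refine ⟨⋃₀ ch, ?_, fun s hs => Set.subset_sUnion_of_mem hs⟩
        rintro p ⟨s1, hs1, hp⟩ q ⟨s2, hs2, hq⟩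
        rcases hch.total hs1 hs2 with hsub' | hsub'
        · exact hchS hs2 p (hsub' hp) q hq
        · exact hchS hs1 p hp q (hsub' hq)) C hcl
  have hblock : IsBlock T B :=
    ⟨hBmax.prop, fun D hBD hDcl => le_antisymm (hBmax.2 hDcl hBD) hBD⟩
  obtain ⟨p, q, hpq, hBeq⟩ := hT.2 B hblock
  have hxB : x ∈ ({p, q} : Set P) := hBeq ▸ hCB (hsub (by simp))
  have hyB : y ∈ ({p, q} : Set P) := hBeq ▸ hCB (hsub (by simp))
  have hpair : B = ({x, y} : Set P) := by
    rw [hBeq]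
    simp only [Set.mem_insert_iff, Set.mem_singleton_iff] at hxB hyB
    rcases hxB with rfl | rfl <;> rcases hyB with rfl | rfl
    · exact absurd rfl hxy
    · rfl
    · exact Set.pair_comm x y ▸ rfl
    · exact absurd rfl hxy
  exact le_antisymm (hpair ▸ hCB) hsub

private lemma cov_of_rel_le {T : P → P → Prop} (hT : TwoUniform T) {x y : P}
    (hxy : x ≠ y) (h : T x y) (hle : x ≤ y) : x ⋖ y := by
  obtain ⟨Trefl, Tsym, Tjoin, Tmeet, T3, T4⟩ := hT.1
  have hblk := pair_block hT hxy h
  refine ⟨lt_of_le_of_ne hle hxy, fun w hw1 hw2 => ?_⟩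
  have hlubx : IsLUB ({x, w} : Set P) w :=
    ⟨by rintro t (rfl | rfl); exacts [hw1.le, le_rfl], fun b hb => hb (by simp)⟩
  have hluby : IsLUB ({y, w} : Set P) y :=
    ⟨by rintro t (rfl | rfl); exacts [le_rfl, hw2.le], fun b hb => hb (by simp)⟩
  have hglbx : IsGLB ({x, w} : Set P) x :=
    ⟨by rintro t (rfl | rfl); exacts [le_rfl, hw1.le], fun b hb => hb (by simp)⟩
  have hglby : IsGLB ({y, w} : Set P) w :=
    ⟨by rintro t (rfl | rfl); exacts [hw2.le, le_rfl], fun b hb => hb (by simp)⟩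
  have hTwy : T w y := Tjoin h (Trefl w) hlubx hluby
  have hTxw : T x w := Tmeet h (Trefl w) hglbx hglby
  have hclq : ∀ a ∈ ({x, y, w} : Set P), ∀ b ∈ ({x, y, w} : Set P), T a b := by
    intro a ha b hb
    simp only [Set.mem_insert_iff, Set.mem_singleton_iff] at ha hb
    rcases ha with rfl | rfl | rfl <;> rcases hb with rfl | rfl | rfl <;>
      first
        | exact Trefl _
        | exact h
        | exact Tsym _ _ h
        | exact hTwy
        | exact Tsym _ _ hTwy
        | exact hTxw
        | exact Tsym _ _ hTxw
  have heq := hblk {x, y, w} (by intro t ht; simp only [Set.mem_insert_iff,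
    Set.mem_singleton_iff] at ht ⊢; tauto) hclq
  have hw : w ∈ ({x, y} : Set P) := heq ▸ (by simp : w ∈ ({x, y, w} : Set P))
  simp only [Set.mem_insert_iff, Set.mem_singleton_iff] at hw
  rcases hw with rfl | rfl
  · exact absurd rfl hw1.ne'
  · exact absurd rfl hw2.ne

private lemma rel_cov {T : P → P → Prop} (hT : TwoUniform T) (hne : ∃ a b, ¬ T a b)
    {x y : P} (hxy : x ≠ y) (h : T x y) : x ⋖ y ∨ y ⋖ x := by
  obtain ⟨Trefl, Tsym, Tjoin, Tmeet, T3, T4⟩ := hT.1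
  have hblk := pair_block hT hxy h
  obtain ⟨z, u, hzu, hzx, hzy, hxu, hyu, hkey⟩ := T4 hne h
  have hxzu := hkey x (Trefl x) h
  have hyzu := hkey y (Tsym _ _ h) (Trefl y)
  have hclq : ∀ a ∈ ({x, y, z, u} : Set P), ∀ b ∈ ({x, y, z, u} : Set P), T a b := by
    intro a ha b hb
    simp only [Set.mem_insert_iff, Set.mem_singleton_iff] at ha hb
    rcases ha with rfl | rfl | rfl | rfl <;> rcases hb with rfl | rfl | rfl | rfl <;>
      first
        | exact Trefl _
        | exact h
        | exact Tsym _ _ h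
        | exact hxzu.1
        | exact Tsym _ _ hxzu.1
        | exact hxzu.2
        | exact Tsym _ _ hxzu.2
        | exact hyzu.1
        | exact Tsym _ _ hyzu.1
        | exact hyzu.2
        | exact Tsym _ _ hyzu.2
        | exact hzu
        | exact Tsym _ _ hzu
  have heq := hblk {x, y, z, u} (by intro t ht; simp only [Set.mem_insert_iff,
    Set.mem_singleton_iff] at ht ⊢; tauto) hclq
  have hz : z ∈ ({x, y} : Set P) := heq ▸ (by simp : z ∈ ({x, y, z, u} : Set P))
  simp only [Set.mem_insert_iff, Set.mem_singleton_iff] at hz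
  rcases hz with rfl | rfl
  · exact Or.inl (cov_of_rel_le hT hxy h hzy)
  · exact Or.inr (cov_of_rel_le hT hxy.symm (Tsym _ _ h) hzx)

/-- Condition (5) for permuting 2-uniform tolerances. -/
theorem stmt_4 {P : Type*} [PartialOrder P] (T S : P → P → Prop)
    (hP : ∃ x y z : P, x ≠ y ∧ x ≠ z ∧ y ≠ z)
    (hT : TwoUniform T) (hS : TwoUniform S) (hperm : Permute T S)
    (a b c : P) (hab : a ≠ b) (hca : LowerNbr T c a) (hcb : LowerNbr S c b) :
    ∃ d, LowerNbr S a d ∧ LowerNbr T b d := by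
  have hcova : c ⋖ a := hca.1
  have hTca : T c a := hca.2
  have hcovb : c ⋖ b := hcb.1
  have hScb : S c b := hcb.2
  have hTsym := hT.1.2.1
  have hSsym := hS.1.2.1
  have hTne := tol_not_all hT hP
  have hSne := tol_not_all hS hP
  -- a and b are incomparable
  have hnba : ¬ b ≤ a := fun hle => hcova.2 hcovb.1 (lt_of_le_of_ne hle hab.symm)
  have hnab : ¬ a ≤ b := fun hle => hcovb.2 hcova.1 (lt_of_le_of_ne hle hab)
  -- obtain f with T b f and S f a by permutability
  obtain ⟨f, hTbf, hSfa⟩ := (hperm b a).mpr ⟨c, hSsym _ _ hScb, hTca⟩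
  by_cases hfa : f = a
  · rw [hfa] at hTbf
    rcases rel_cov hT hTne (Ne.symm hab) hTbf with hc | hc
    · exact absurd hc.1.le hnba
    · exact absurd hc.1.le hnab
  by_cases hfb : f = b
  · rw [hfb] at hSfa
    rcases rel_cov hS hSne (Ne.symm hab) hSfa with hc | hc
    · exact absurd hc.1.le hnba
    · exact absurd hc.1.le hnab
  rcases rel_cov hT hTne (fun h => hfb h.symm) hTbf with hbf | hbf <;>
    rcases rel_cov hS hSne hfa hSfa with hfa' | hfa'
  · -- b ⋖ f and f ⋖ a : b < a, contradiction
    exact absurd (hbf.1.trans hfa'.1).le hnba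
  · -- b ⋖ f and a ⋖ f : done
    exact ⟨f, ⟨hfa', hSsym _ _ hSfa⟩, ⟨hbf, hTbf⟩⟩
  · -- f ⋖ b and f ⋖ a : use join compatibility of S to get S a b
    have hlub1 : IsLUB ({c, a} : Set P) a :=
      ⟨by rintro t (rfl | rfl); exacts [hcova.1.le, le_rfl], fun w hw => hw (by simp)⟩
    have hlub2 : IsLUB ({b, f} : Set P) b :=
      ⟨by rintro t (rfl | rfl); exacts [le_rfl, hbf.1.le], fun w hw => hw (by simp)⟩
    have hSab : S a b := hS.1.2.2.1 hScb (hSsym _ _ hSfa) hlub1 hlub2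
    rcases rel_cov hS hSne hab hSab with hc | hc
    · exact absurd hc.1.le hnab
    · exact absurd hc.1.le hnba
  · -- f ⋖ b and a ⋖ f : a < b, contradiction
    exact absurd (hfa'.1.trans hbf.1).le hnab
end

section
/- Let T and S be 2-uniform tolerances on a poset P (|P| > 2) containing no infinite chain. Then T and S permute if and only if they are amicable. -/
variable {P : Type*} [PartialOrder P]

section Aux
variable {Q : Type*} [PartialOrder Q] {T : Q → Q → Prop}

lemma tol_refl (hT : TwoUniform T) : ∀ x, T x x := hT.1.1
lemma tol_symm (hT : TwoUniform T) : ∀ x y, T x y → T y x := hT.1.2.1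

/-- every clique extends to a block -/
lemma exists_block (hT : TwoUniform T) (C : Set Q) (hC : ∀ x ∈ C, ∀ y ∈ C, T x y)
    (hne : C.Nonempty) : ∃ B, C ⊆ B ∧ IsBlock T B := by
  obtain ⟨m, hCm, hmax⟩ := zorn_subset_nonempty {D : Set Q | ∀ x ∈ D, ∀ y ∈ D, T x y}
    (fun c hcS hchain hcne => by
      refine ⟨⋃₀ c, ?_, fun s hs => Set.subset_sUnion_of_mem hs⟩
      rintro x ⟨sx, hsx, hxsx⟩ y ⟨sy, hsy, hysy⟩
      rcases hchain.total hsx hsy with h | h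
      · exact hcS hsy x (h hxsx) y hysy
      · exact hcS hsx x hxsx y (h hysy)) C hC
  exact ⟨m, hCm, hmax.prop, fun D hmD hD => (hmax.eq_of_subset hD hmD).symm⟩

lemma no_triangle (hT : TwoUniform T) {x y z : Q} (hxy : x ≠ y) (hxz : x ≠ z) (hyz : y ≠ z)
    (t1 : T x y) (t2 : T x z) (t3 : T y z) : False := by
  have hC : ∀ u ∈ ({x, y, z} : Set Q), ∀ v ∈ ({x, y, z} : Set Q), T u v := by
    rintro u (rfl | rfl | rfl) v (rfl | rfl | rfl) <;>
      first
        | exact hT.1.1 _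
        | exact t1 | exact t2 | exact t3
        | exact hT.1.2.1 _ _ t1 | exact hT.1.2.1 _ _ t2 | exact hT.1.2.1 _ _ t3
  obtain ⟨B, hsub, hB⟩ := exists_block hT _ hC ⟨x, by simp⟩
  obtain ⟨p, q, hpq, rfl⟩ := hT.2 B hB
  have hx := hsub (show x ∈ ({x, y, z} : Set Q) by simp)
  have hy := hsub (show y ∈ ({x, y, z} : Set Q) by simp)
  have hz := hsub (show z ∈ ({x, y, z} : Set Q) by simp)
  simp only [Set.mem_insert_iff, Set.mem_singleton_iff] at hx hy hz
  rcases hx with rfl | rfl <;> rcases hy with rfl | rfl <;> rcases hz with rfl | rfl <;>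
    simp_all

lemma exists_partner (hT : TwoUniform T) (x : Q) : ∃ y, x ≠ y ∧ T x y := by
  obtain ⟨B, hsub, hB⟩ := exists_block hT {x} (by rintro u rfl v rfl; exact hT.1.1 _) ⟨x, rfl⟩
  obtain ⟨p, q, hpq, rfl⟩ := hT.2 B hB
  have hx := hsub rfl
  have hp : p ∈ ({p, q} : Set Q) := by simp
  have hq : q ∈ ({p, q} : Set Q) := by simp
  rcases hx with rfl | rfl
  · exact ⟨q, hpq, hB.1 _ hp _ hq⟩
  · exact ⟨p, Ne.symm hpq, hB.1 _ hq _ hp⟩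

lemma exists_not_tol (h3 : ∃ x y z : Q, x ≠ y ∧ x ≠ z ∧ y ≠ z) (hT : TwoUniform T) :
    ∃ a b, ¬ T a b := by
  by_contra h
  push_neg at h
  obtain ⟨x, y, z, hxy, hxz, hyz⟩ := h3
  exact no_triangle hT hxy hxz hyz (h x y) (h x z) (h y z)

lemma isLUB_pair_right {x y : Q} (h : x ≤ y) : IsLUB ({x, y} : Set Q) y :=
  ⟨by rintro z (rfl | rfl); exacts [h, le_rfl], fun w hw => hw (by simp)⟩

lemma isLUB_pair_left {x y : Q} (h : y ≤ x) : IsLUB ({x, y} : Set Q) x :=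
  ⟨by rintro z (rfl | rfl); exacts [le_rfl, h], fun w hw => hw (by simp)⟩

lemma isGLB_pair_left {x y : Q} (h : x ≤ y) : IsGLB ({x, y} : Set Q) x :=
  ⟨by rintro z (rfl | rfl); exacts [le_rfl, h], fun w hw => hw (by simp)⟩

lemma isGLB_pair_right {x y : Q} (h : y ≤ x) : IsGLB ({x, y} : Set Q) y :=
  ⟨by rintro z (rfl | rfl); exacts [h, le_rfl], fun w hw => hw (by simp)⟩

/-- edges of a 2-uniform tolerance are comparable pairs -/
lemma edge_comparable (h3 : ∃ x y z : Q, x ≠ y ∧ x ≠ z ∧ y ≠ z) (hT : TwoUniform T)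
    {a b : Q} (hab : T a b) (hne : a ≠ b) : a < b ∨ b < a := by
  obtain ⟨z, u, hzu, hza, hzb, hau, hbu, hall⟩ :=
    hT.1.2.2.2.2.2 (exists_not_tol h3 hT) hab
  obtain ⟨haz, hau'⟩ := hall a (hT.1.1 a) hab
  obtain ⟨hbz, hbu'⟩ := hall b (hT.1.2.1 _ _ hab) (hT.1.1 b)
  by_cases hZU : z = u
  · subst hZU
    exact absurd ((le_antisymm hza hau).symm.trans (le_antisymm hzb hbu).symm.symm) hne
  by_cases hAZ : a = z
  · exact Or.inl (lt_of_le_of_ne (hAZ ▸ hzb) hne)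
  by_cases hAU : a = u
  · exact Or.inr (lt_of_le_of_ne (hAU ▸ hbu) (Ne.symm hne))
  · exact absurd (no_triangle hT hAZ hAU hZU haz hau' hzu) id

/-- comparable edges are covering pairs -/
lemma edge_covby (h3 : ∃ x y z : Q, x ≠ y ∧ x ≠ z ∧ y ≠ z) (hT : TwoUniform T)
    {a b : Q} (hab : T a b) (hlt : a < b) : a ⋖ b := by
  refine ⟨hlt, fun c hac hcb => ?_⟩
  have h1 : T c b := hT.1.2.2.1 hab (hT.1.1 c) (isLUB_pair_right hac.le)
    (isLUB_pair_left hcb.le)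
  have h2 : T a c := hT.1.2.2.2.1 hab (hT.1.1 c) (isGLB_pair_left hac.le)
    (isGLB_pair_right hcb.le)
  exact no_triangle hT hac.ne (hac.trans hcb).ne hcb.ne h2 hab h1

lemma edge_cover_or (h3 : ∃ x y z : Q, x ≠ y ∧ x ≠ z ∧ y ≠ z) (hT : TwoUniform T)
    {a b : Q} (hab : T a b) (hne : a ≠ b) : a ⋖ b ∨ b ⋖ a := by
  rcases edge_comparable h3 hT hab hne with h | h
  · exact Or.inl (edge_covby h3 hT hab h)
  · exact Or.inr (edge_covby h3 hT (hT.1.2.1 _ _ hab) h)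

lemma lower_le (h3 : ∃ x y z : Q, x ≠ y ∧ x ≠ z ∧ y ≠ z) (hT : TwoUniform T)
    {x x' y : Q} (h1 : LowerNbr T x y) (h2 : LowerNbr T x' y) : x ≤ x' := by
  obtain ⟨u, v, hux, huy, hux', -, -, -, hTuy, -⟩ :=
    hT.1.2.2.2.2.1 (exists_not_tol h3 hT) h1.2 (hT.1.2.1 _ _ h2.2)
  have huylt : u < y := lt_of_le_of_lt hux h1.1.lt
  have hcov : u ⋖ y := edge_covby h3 hT hTuy huylt
  have : u = x := by
    rcases lt_or_eq_of_le hux with h | h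
    · exact absurd h1.1.lt (hcov.2 h)
    · exact h
  exact this ▸ hux'

lemma lower_unique (h3 : ∃ x y z : Q, x ≠ y ∧ x ≠ z ∧ y ≠ z) (hT : TwoUniform T)
    {x x' y : Q} (h1 : LowerNbr T x y) (h2 : LowerNbr T x' y) : x = x' :=
  le_antisymm (lower_le h3 hT h1 h2) (lower_le h3 hT h2 h1)

lemma upper_ge (h3 : ∃ x y z : Q, x ≠ y ∧ x ≠ z ∧ y ≠ z) (hT : TwoUniform T)
    {x x' y : Q} (h1 : LowerNbr T y x) (h2 : LowerNbr T y x') : x' ≤ x := by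
  obtain ⟨u, v, -, -, -, hxv, hyv, hx'v, -, hTyv⟩ :=
    hT.1.2.2.2.2.1 (exists_not_tol h3 hT) (hT.1.2.1 _ _ h1.2) h2.2
  have hyvlt : y < v := lt_of_lt_of_le h1.1.lt hxv
  have hcov : y ⋖ v := edge_covby h3 hT hTyv hyvlt
  have : v = x := by
    rcases lt_or_eq_of_le hxv with h | h
    · exact absurd h (hcov.2 h1.1.lt)
    · exact h.symm
  exact this ▸ hx'v

lemma upper_unique (h3 : ∃ x y z : Q, x ≠ y ∧ x ≠ z ∧ y ≠ z) (hT : TwoUniform T)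
    {x x' y : Q} (h1 : LowerNbr T y x) (h2 : LowerNbr T y x') : x = x' :=
  le_antisymm (upper_ge h3 hT h2 h1) (upper_ge h3 hT h1 h2)

lemma exists_cov_partner (h3 : ∃ x y z : Q, x ≠ y ∧ x ≠ z ∧ y ≠ z) (hT : TwoUniform T)
    (x : Q) : (∃ y, LowerNbr T x y) ∨ ∃ y, LowerNbr T y x := by
  obtain ⟨y, hne, hxy⟩ := exists_partner hT x
  rcases edge_cover_or h3 hT hxy hne with h | h
  · exact Or.inl ⟨y, h, hxy⟩
  · exact Or.inr ⟨y, h, hT.1.2.1 _ _ hxy⟩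

end Aux

section Dual
variable {Q : Type*} [PartialOrder Q] {T S : Q → Q → Prop}

lemma posetTolerance_dual (h : PosetTolerance T) : PosetTolerance (P := Qᵒᵈ) T := by
  obtain ⟨hrefl, hsymm, hjoin, hmeet, h3, h4⟩ := h
  refine ⟨hrefl, hsymm, ?_, ?_, ?_, ?_⟩
  · intro x y z u j k hxy hzu hj hk
    exact hmeet hxy hzu (IsLUB.dual (α := Qᵒᵈ) hj) (IsLUB.dual (α := Qᵒᵈ) hk)
  · intro x y z u j k hxy hzu hj hk
    exact hjoin hxy hzu (IsGLB.dual (α := Qᵒᵈ) hj) (IsGLB.dual (α := Qᵒᵈ) hk)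
  · intro hg x y z hxy hyz
    obtain ⟨u, v, hux, huy, huz, hxv, hyv, hzv, hTuy, hTyv⟩ := h3 hg hxy hyz
    exact ⟨v, u, hxv, hyv, hzv, hux, huy, huz, hsymm _ _ hTyv, hsymm _ _ hTuy⟩
  · intro hg x y hxy
    obtain ⟨z, u, hzu, hzx, hzy, hxu, hyu, hall⟩ := h4 hg hxy
    exact ⟨u, z, hsymm _ _ hzu, hxu, hyu, hzx, hzy, fun v h1 h2 => ⟨(hall v h1 h2).2, (hall v h1 h2).1⟩⟩

lemma twoUniform_dual (h : TwoUniform T) : TwoUniform (P := Qᵒᵈ) T :=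
  ⟨posetTolerance_dual h.1, h.2⟩

lemma lowerNbr_dual (hs : ∀ x y, T x y → T y x) {a b : Q} (h : LowerNbr T a b) :
    LowerNbr (P := Qᵒᵈ) T b a :=
  ⟨⟨h.1.lt, fun c h1 h2 => h.1.2 h2 h1⟩, hs _ _ h.2⟩

lemma lowerNbr_of_dual (hs : ∀ x y, T x y → T y x) {a b : Q} (h : LowerNbr (P := Qᵒᵈ) T a b) :
    LowerNbr T b a :=
  ⟨⟨h.1.lt, fun c h1 h2 => h.1.2 h2 h1⟩, hs _ _ h.2⟩

lemma amicable_dual (hsT : ∀ x y, T x y → T y x) (hsS : ∀ x y, S x y → S y x)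
    (h : Amicable T S) : Amicable (P := Qᵒᵈ) T S := by
  obtain ⟨h5, h6, h7, h8⟩ := h
  refine ⟨?_, ?_, ?_, ?_⟩
  · intro a b hne ⟨c, h1, h2⟩
    obtain ⟨d, hd1, hd2⟩ := h6 a b hne ⟨c, lowerNbr_of_dual hsT h1, lowerNbr_of_dual hsS h2⟩
    exact ⟨d, lowerNbr_dual hsS hd1, lowerNbr_dual hsT hd2⟩
  · intro a b hne ⟨c, h1, h2⟩
    obtain ⟨d, hd1, hd2⟩ := h5 a b hne ⟨c, lowerNbr_of_dual hsT h1, lowerNbr_of_dual hsS h2⟩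
    exact ⟨d, lowerNbr_dual hsS hd1, lowerNbr_dual hsT hd2⟩
  · intro a b ⟨⟨p, hp⟩, ⟨q, hq⟩⟩ hor
    have : TSBottom T S a := ⟨⟨p, lowerNbr_of_dual hsT hp⟩, ⟨q, lowerNbr_of_dual hsS hq⟩⟩
    have hres := h8 a b this (hor.imp (lowerNbr_of_dual hsT) (lowerNbr_of_dual hsS))
    exact ⟨hres.1.imp fun x hx => lowerNbr_dual hsT hx, hres.2.imp fun x hx => lowerNbr_dual hsS hx⟩
  · intro a b ⟨⟨p, hp⟩, ⟨q, hq⟩⟩ hor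
    have : TSTop T S a := ⟨⟨p, lowerNbr_of_dual hsT hp⟩, ⟨q, lowerNbr_of_dual hsS hq⟩⟩
    have hres := h7 a b this (hor.imp (lowerNbr_of_dual hsT) (lowerNbr_of_dual hsS))
    exact ⟨hres.1.imp fun x hx => lowerNbr_dual hsT hx, hres.2.imp fun x hx => lowerNbr_dual hsS hx⟩

lemma h3_dual (h3 : ∃ x y z : Q, x ≠ y ∧ x ≠ z ∧ y ≠ z) :
    ∃ x y z : Qᵒᵈ, x ≠ y ∧ x ≠ z ∧ y ≠ z := h3

lemma hchain_dual (hch : ∀ C : Set Q, IsChain (· ≤ ·) C → C.Finite) :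
    ∀ C : Set Qᵒᵈ, IsChain (· ≤ ·) C → C.Finite := by
  intro C hC
  exact hch C (fun a ha b hb hne => (hC ha hb hne).symm)

end Dual

section Core
variable {Q : Type*} [PartialOrder Q] {T S : Q → Q → Prop}

/-- A "bad" configuration: a `T`-covering edge `y ⋖ z` where `y` has no upper `S`-neighbor
and `z` has no lower `S`-neighbor. Under amicability this propagates upward forever. -/
def BadCfg (T S : Q → Q → Prop) (y z : Q) : Prop :=
  LowerNbr T y z ∧ (¬ ∃ s, LowerNbr S y s) ∧ (¬ ∃ e, LowerNbr S e z)

lemma bad_step (h3 : ∃ x y z : Q, x ≠ y ∧ x ≠ z ∧ y ≠ z)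
    (hT : TwoUniform T) (hS : TwoUniform S) (hA : Amicable T S)
    {y z : Q} (hb : BadCfg T S y z) : ∃ g h, BadCfg T S g h ∧ y < g := by
  obtain ⟨hyz, hyS, hzS⟩ := hb
  -- z has an S-partner, necessarily upward
  have hzg : ∃ g, LowerNbr S z g := by
    rcases exists_cov_partner h3 hS z with h | h
    · exact h
    · exact absurd h hzS
  obtain ⟨g, hzg⟩ := hzg
  -- z has no upper T-neighbor
  have hzT : ¬ ∃ h', LowerNbr T z h' := by
    rintro ⟨h', hzh'⟩
    have hbz : TSBottom T S z := ⟨⟨h', hzh'⟩, ⟨g, hzg⟩⟩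
    have hby : TSBottom T S y := hA.2.2.2 z y hbz (Or.inl hyz)
    exact hyS hby.2
  -- g has no lower T-neighbor
  have hgT : ¬ ∃ t, LowerNbr T t g := by
    rintro ⟨t, htg⟩
    by_cases htz : t = z
    · exact hzT ⟨g, htz ▸ htg⟩
    · obtain ⟨d, hd1, hd2⟩ := hA.2.1 t z htz ⟨g, htg, hzg⟩
      have : d = y := lower_unique h3 hT hd2 hyz
      exact hyS ⟨t, this ▸ hd1⟩
  -- g has an upper T-neighbor h
  have hgh : ∃ h, LowerNbr T g h := by
    rcases exists_cov_partner h3 hT g with h | h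
    · exact h
    · exact absurd h hgT
  obtain ⟨h, hgh⟩ := hgh
  -- g has no upper S-neighbor
  have hgS : ¬ ∃ s, LowerNbr S g s := by
    rintro ⟨s, hgs⟩
    have hbg : TSBottom T S g := ⟨⟨h, hgh⟩, ⟨s, hgs⟩⟩
    have hbz : TSBottom T S z := hA.2.2.2 g z hbg (Or.inr hzg)
    exact hzT hbz.1
  -- h has no lower S-neighbor
  have hhS : ¬ ∃ e, LowerNbr S e h := by
    rintro ⟨e, heh⟩
    by_cases heg : e = g
    · exact hgS ⟨h, heg ▸ heh⟩
    · obtain ⟨d, hd1, hd2⟩ := hA.2.1 g e (Ne.symm heg) ⟨h, hgh, heh⟩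
      have : d = z := lower_unique h3 hS hd1 hzg
      exact hzT ⟨e, this ▸ hd2⟩
  exact ⟨g, h, ⟨hgh, hgS, hhS⟩, lt_trans hyz.1.lt hzg.1.lt⟩

lemma no_bad (h3 : ∃ x y z : Q, x ≠ y ∧ x ≠ z ∧ y ≠ z)
    (hch : ∀ C : Set Q, IsChain (· ≤ ·) C → C.Finite)
    (hT : TwoUniform T) (hS : TwoUniform S) (hA : Amicable T S)
    {y z : Q} (hb : BadCfg T S y z) : False := by
  have key : ∀ s : {p : Q × Q // BadCfg T S p.1 p.2},
      ∃ t : {p : Q × Q // BadCfg T S p.1 p.2}, s.1.1 < t.1.1 := by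
    rintro ⟨⟨y', z'⟩, hb'⟩
    obtain ⟨g, h, hgh, hlt⟩ := bad_step h3 hT hS hA hb'
    exact ⟨⟨(g, h), hgh⟩, hlt⟩
  let F : {p : Q × Q // BadCfg T S p.1 p.2} → {p : Q × Q // BadCfg T S p.1 p.2} :=
    fun s => (key s).choose
  let u : ℕ → {p : Q × Q // BadCfg T S p.1 p.2} := fun n => F^[n] ⟨(y, z), hb⟩
  have hmono : StrictMono (fun n => (u n).1.1) := by
    apply strictMono_nat_of_lt_succ
    intro n
    have : u (n + 1) = F (u n) := Function.iterate_succ_apply' F n _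
    rw [this]
    exact (key (u n)).choose_spec
  have hinf : (Set.range fun n => (u n).1.1).Infinite :=
    Set.infinite_range_of_injective hmono.injective
  have hchain : IsChain (· ≤ ·) (Set.range fun n => (u n).1.1) := by
    rintro _ ⟨m, rfl⟩ _ ⟨n, rfl⟩ hne
    rcases lt_trichotomy m n with h | h | h
    · exact Or.inl (hmono h).le
    · subst h; exact absurd rfl hne
    · exact Or.inr (hmono h).le
  exact hinf (hch _ hchain)

/-- Case (C) of the composition argument: `b ⋖_S c ⋖_T a` yields `e` with
`b ⋖_T e ⋖_S a`. -/
lemma caseC (h3 : ∃ x y z : Q, x ≠ y ∧ x ≠ z ∧ y ≠ z)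
    (hch : ∀ C : Set Q, IsChain (· ≤ ·) C → C.Finite)
    (hT : TwoUniform T) (hS : TwoUniform S) (hA : Amicable T S)
    {a b c : Q} (hbc : LowerNbr S b c) (hca : LowerNbr T c a) :
    ∃ e, LowerNbr T b e ∧ LowerNbr S e a := by
  -- the (6)-trick: any lower S-neighbor e₁ ≠ c of a gives the conclusion
  have trick : ∀ e₁, LowerNbr S e₁ a → e₁ ≠ c → LowerNbr T b e₁ := by
    intro e₁ he₁ hne
    obtain ⟨d, hd1, hd2⟩ := hA.2.1 c e₁ (Ne.symm hne) ⟨a, hca, he₁⟩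
    have : d = b := lower_unique h3 hS hd1 hbc
    exact this ▸ hd2
  by_cases hbu : ∃ e₀, LowerNbr T b e₀
  · obtain ⟨e₀, he₀⟩ := hbu
    by_cases he₀c : e₀ = c
    · -- b ⋖_T c : c is an adherent top, propagate to a
      subst he₀c
      have htopc : TSTop T S e₀ := ⟨⟨b, he₀⟩, ⟨b, hbc⟩⟩
      have htopa : TSTop T S a := hA.2.2.1 e₀ a htopc (Or.inl hca)
      obtain ⟨-, e₁, he₁⟩ := htopa
      by_cases he₁c : e₁ = e₀
      · exact ⟨e₀, he₀, he₁c ▸ he₁⟩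
      · exact ⟨e₁, trick e₁ he₁ he₁c, he₁⟩
    · -- split case: use (5)
      obtain ⟨d, hd1, hd2⟩ := hA.1 e₀ c he₀c ⟨b, he₀, hbc⟩
      have : d = a := upper_unique h3 hT hd2 hca
      exact ⟨e₀, he₀, this ▸ hd1⟩
  · -- b has no upper T-neighbor
    by_cases hcs : ∃ s, LowerNbr S c s
    · -- c is a bottom, so b must be a bottom: contradiction
      obtain ⟨s, hcs'⟩ := hcs
      have hbotc : TSBottom T S c := ⟨⟨a, hca⟩, ⟨s, hcs'⟩⟩
      have hbotb : TSBottom T S b := hA.2.2.2 c b hbotc (Or.inr hbc)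
      exact absurd hbotb.1 hbu
    · by_cases haS : ∃ e₁, LowerNbr S e₁ a
      · obtain ⟨e₁, he₁⟩ := haS
        have hne : e₁ ≠ c := fun h => hcs ⟨a, h ▸ he₁⟩
        exact ⟨e₁, trick e₁ he₁ hne, he₁⟩
      · exact absurd (no_bad h3 hch hT hS hA ⟨hca, hcs, haS⟩) id

end Core

section Final
variable {Q : Type*} [PartialOrder Q] {T S : Q → Q → Prop}

lemma caseD (h3 : ∃ x y z : Q, x ≠ y ∧ x ≠ z ∧ y ≠ z)
    (hch : ∀ C : Set Q, IsChain (· ≤ ·) C → C.Finite)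
    (hT : TwoUniform T) (hS : TwoUniform S) (hA : Amicable T S)
    {a b c : Q} (hac : LowerNbr T a c) (hcb : LowerNbr S c b) :
    ∃ e, LowerNbr S a e ∧ LowerNbr T e b := by
  obtain ⟨e, he1, he2⟩ := @caseC Qᵒᵈ _ T S (h3_dual h3) (hchain_dual hch)
    (twoUniform_dual hT) (twoUniform_dual hS)
    (amicable_dual (tol_symm hT) (tol_symm hS) hA) a b c
    (lowerNbr_dual (tol_symm hS) hcb) (lowerNbr_dual (tol_symm hT) hac)
  exact ⟨e, lowerNbr_of_dual (tol_symm hS) he2, lowerNbr_of_dual (tol_symm hT) he1⟩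

/-- Forward composition inclusion from amicability. -/
lemma main_forward (h3 : ∃ x y z : Q, x ≠ y ∧ x ≠ z ∧ y ≠ z)
    (hch : ∀ C : Set Q, IsChain (· ≤ ·) C → C.Finite)
    (hT : TwoUniform T) (hS : TwoUniform S) (hA : Amicable T S)
    {a b : Q} (h : ∃ c, T a c ∧ S c b) : ∃ e, S a e ∧ T e b := by
  obtain ⟨c, hac, hcb⟩ := h
  by_cases hac_eq : a = c
  · exact ⟨b, hac_eq ▸ hcb, tol_refl hT b⟩
  by_cases hcb_eq : c = b
  · exact ⟨a, tol_refl hS a, hcb_eq ▸ hac⟩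
  rcases edge_cover_or h3 hT hac hac_eq with hAC | hCA <;>
    rcases edge_cover_or h3 hS hcb hcb_eq with hCB | hBC
  · -- a ⋖ c, c ⋖ b : case (D)
    obtain ⟨e, he1, he2⟩ := caseD h3 hch hT hS hA ⟨hAC, hac⟩ ⟨hCB, hcb⟩
    exact ⟨e, he1.2, he2.2⟩
  · -- a ⋖ c, b ⋖ c : case (B)
    by_cases hab : a = b
    · subst hab
      exact ⟨c, tol_symm hS _ _ hcb, tol_symm hT _ _ hac⟩
    · obtain ⟨d, hd1, hd2⟩ := hA.2.1 a b hab ⟨c, ⟨hAC, hac⟩, ⟨hBC, tol_symm hS _ _ hcb⟩⟩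
      exact ⟨d, tol_symm hS _ _ hd1.2, hd2.2⟩
  · -- c ⋖ a, c ⋖ b : case (A)
    by_cases hab : a = b
    · subst hab
      exact ⟨c, tol_symm hS _ _ hcb, tol_symm hT _ _ hac⟩
    · obtain ⟨d, hd1, hd2⟩ := hA.1 a b hab ⟨c, ⟨hCA, tol_symm hT _ _ hac⟩, ⟨hCB, hcb⟩⟩
      exact ⟨d, hd1.2, tol_symm hT _ _ hd2.2⟩
  · -- c ⋖ a, b ⋖ c : case (C)
    obtain ⟨e, he1, he2⟩ := caseC h3 hch hT hS hA ⟨hBC, tol_symm hS _ _ hcb⟩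
      ⟨hCA, tol_symm hT _ _ hac⟩
    exact ⟨e, tol_symm hS _ _ he2.2, tol_symm hT _ _ he1.2⟩

lemma amicable_symm (h : Amicable T S) : Amicable S T := by
  obtain ⟨h5, h6, h7, h8⟩ := h
  refine ⟨?_, ?_, ?_, ?_⟩
  · intro a b hne ⟨c, h1, h2⟩
    obtain ⟨d, hd1, hd2⟩ := h5 b a (Ne.symm hne) ⟨c, h2, h1⟩
    exact ⟨d, hd2, hd1⟩
  · intro a b hne ⟨c, h1, h2⟩
    obtain ⟨d, hd1, hd2⟩ := h6 b a (Ne.symm hne) ⟨c, h2, h1⟩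
    exact ⟨d, hd2, hd1⟩
  · intro a b htop hor
    have := h7 a b ⟨htop.2, htop.1⟩ hor.symm
    exact ⟨this.2, this.1⟩
  · intro a b hbot hor
    have := h8 a b ⟨hbot.2, hbot.1⟩ hor.symm
    exact ⟨this.2, this.1⟩

/-- Permute implies condition (5). -/
lemma perm5 (h3 : ∃ x y z : Q, x ≠ y ∧ x ≠ z ∧ y ≠ z)
    (hT : TwoUniform T) (hS : TwoUniform S) (hp : Permute T S) :
    ∀ a b : Q, a ≠ b → (∃ c, LowerNbr T c a ∧ LowerNbr S c b) →
      ∃ d, LowerNbr S a d ∧ LowerNbr T b d := by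
  rintro a b hab ⟨c, hca, hcb⟩
  have hnab : ¬ a < b := fun h => hcb.1.2 hca.1.lt h
  have hnba : ¬ b < a := fun h => hca.1.2 hcb.1.lt h
  obtain ⟨d, had, hdb⟩ := (hp a b).1 ⟨c, tol_symm hT _ _ hca.2, hcb.2⟩
  have hda : d ≠ a := by
    rintro rfl
    rcases edge_comparable h3 hT hdb hab with h | h
    exacts [hnab h, hnba h]
  have hdb' : d ≠ b := by
    rintro rfl
    rcases edge_comparable h3 hS had hab with h | h
    exacts [hnab h, hnba h]
  rcases edge_cover_or h3 hS had (Ne.symm hda) with hAD | hDA <;>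
    rcases edge_cover_or h3 hT hdb hdb' with hDB | hBD
  · exact absurd (hAD.lt.trans hDB.lt) hnab
  · exact ⟨d, ⟨hAD, had⟩, ⟨hBD, tol_symm hT _ _ hdb⟩⟩
  · -- both below: contradict join-compatibility
    have hba : T b a := hT.1.2.2.1 hca.2 (tol_symm hT _ _ hdb)
      (isLUB_pair_right hcb.1.lt.le) (isLUB_pair_left hDA.lt.le)
    rcases edge_comparable h3 hT hba (Ne.symm hab) with h | h
    exacts [absurd h hnba, absurd h hnab]
  · exact absurd (hBD.lt.trans hDA.lt) hnba

/-- Permute implies condition (7). -/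
lemma perm7 (h3 : ∃ x y z : Q, x ≠ y ∧ x ≠ z ∧ y ≠ z)
    (hT : TwoUniform T) (hS : TwoUniform S) (hp : Permute T S) :
    ∀ a b : Q, TSTop T S a → (LowerNbr T a b ∨ LowerNbr S a b) → TSTop T S b := by
  rintro a b ⟨⟨c, hca⟩, ⟨d, hda⟩⟩ hor
  rcases hor with hab | hab
  · refine ⟨⟨a, hab⟩, ?_⟩
    obtain ⟨e, hde, heb⟩ := (hp d b).2 ⟨a, hda.2, hab.2⟩
    have hdb : d < b := hda.1.lt.trans hab.1.lt
    have hndb : ¬ d ⋖ b := fun h => h.2 hda.1.lt hab.1.lt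
    have hed : e ≠ d := by
      rintro rfl
      rcases edge_cover_or h3 hS heb hdb.ne with h | h
      exacts [hndb h, absurd (h.lt.trans hdb) (lt_irrefl _)]
    have hebne : e ≠ b := by
      rintro rfl
      rcases edge_cover_or h3 hT hde hdb.ne with h | h
      exacts [hndb h, absurd (h.lt.trans hdb) (lt_irrefl _)]
    rcases edge_cover_or h3 hS heb hebne with hEB | hBE
    · exact ⟨e, hEB, heb⟩
    · -- b ⋖ e : then T d e is a non-covering comparable edge
      exfalso
      rcases edge_cover_or h3 hT hde hed.symm with h | h
      · exact h.2 (hda.1.lt.trans hab.1.lt) hBE.lt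
      · exact absurd (h.lt.trans (hdb.trans hBE.lt)) (lt_irrefl _)
  · refine ⟨?_, ⟨a, hab⟩⟩
    obtain ⟨e, hce, heb⟩ := (hp c b).1 ⟨a, hca.2, hab.2⟩
    have hcb : c < b := hca.1.lt.trans hab.1.lt
    have hncb : ¬ c ⋖ b := fun h => h.2 hca.1.lt hab.1.lt
    have hec : e ≠ c := by
      rintro rfl
      rcases edge_cover_or h3 hT heb hcb.ne with h | h
      exacts [hncb h, absurd (h.lt.trans hcb) (lt_irrefl _)]
    have hebne : e ≠ b := by
      rintro rfl
      rcases edge_cover_or h3 hS hce hcb.ne with h | h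
      exacts [hncb h, absurd (h.lt.trans hcb) (lt_irrefl _)]
    rcases edge_cover_or h3 hT heb hebne with hEB | hBE
    · exact ⟨e, hEB, heb⟩
    · exfalso
      rcases edge_cover_or h3 hS hce hec.symm with h | h
      · exact h.2 (hca.1.lt.trans hab.1.lt) hBE.lt
      · exact absurd (h.lt.trans (hcb.trans hBE.lt)) (lt_irrefl _)

lemma permute_symm (h : Permute T S) : Permute S T := fun a b => (h a b).symm

end Final

section Assemble
variable {Q : Type*} [PartialOrder Q] {T S : Q → Q → Prop}

lemma permute_dual (hp : Permute T S) : Permute (P := Qᵒᵈ) T S := hp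

lemma tsBottom_dual (h : TSBottom T S a) (hsT : ∀ x y, T x y → T y x)
    (hsS : ∀ x y, S x y → S y x) : TSTop (P := Qᵒᵈ) T S a :=
  ⟨h.1.imp fun x hx => lowerNbr_dual hsT hx, h.2.imp fun x hx => lowerNbr_dual hsS hx⟩

lemma tsTop_of_dual (h : TSTop (P := Qᵒᵈ) T S a) (hsT : ∀ x y, T x y → T y x)
    (hsS : ∀ x y, S x y → S y x) : TSBottom T S a :=
  ⟨h.1.imp fun x hx => lowerNbr_of_dual hsT hx, h.2.imp fun x hx => lowerNbr_of_dual hsS hx⟩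

end Assemble

/-- Main theorem: on a poset with no infinite chain, two 2-uniform tolerances
permute iff they are amicable. -/
theorem stmt_8 {P : Type*} [PartialOrder P] (T S : P → P → Prop)
    (hP : ∃ x y z : P, x ≠ y ∧ x ≠ z ∧ y ≠ z)
    (hchain : ∀ C : Set P, IsChain (· ≤ ·) C → C.Finite)
    (hT : TwoUniform T) (hS : TwoUniform S) :
    Permute T S ↔ Amicable T S := by
  constructor
  · intro hp
    refine ⟨perm5 hP hT hS hp, ?_, perm7 hP hT hS hp, ?_⟩
    · rintro a b hne ⟨c, h1, h2⟩
      obtain ⟨d, hd1, hd2⟩ := @perm5 Pᵒᵈ _ T S (h3_dual hP) (twoUniform_dual hT)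
        (twoUniform_dual hS) (permute_dual hp) a b hne
        ⟨c, lowerNbr_dual (tol_symm hT) h1, lowerNbr_dual (tol_symm hS) h2⟩
      exact ⟨d, lowerNbr_of_dual (tol_symm hS) hd1, lowerNbr_of_dual (tol_symm hT) hd2⟩
    · intro a b hbot hor
      have := @perm7 Pᵒᵈ _ T S (h3_dual hP) (twoUniform_dual hT)
        (twoUniform_dual hS) (permute_dual hp) a b
        (tsBottom_dual hbot (tol_symm hT) (tol_symm hS))
        (hor.imp (lowerNbr_dual (tol_symm hT)) (lowerNbr_dual (tol_symm hS)))
      exact tsTop_of_dual this (tol_symm hT) (tol_symm hS)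
  · intro hA a b
    constructor
    · exact fun h => main_forward hP hchain hT hS hA h
    · exact fun h => main_forward hP hchain hS hT (amicable_symm hA) h
end

section
/- Every block of a tolerance T on a poset P is a convex subset of P: if B is a maximal subset with B² ⊆ T, x, z ∈ B and x ≤ y ≤ z, then y ∈ B. -/
variable {P : Type*} [PartialOrder P]

private lemma isLUB_pair_left_s12 {P : Type*} [PartialOrder P] {a b : P} (h : a ≤ b) :
    IsLUB ({a, b} : Set P) b :=
  ⟨by rintro c (rfl | rfl) <;> simp [h], fun c hc => hc (by simp)⟩

private lemma isLUB_pair_right_s12 {P : Type*} [PartialOrder P] {a b : P} (h : b ≤ a) :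
    IsLUB ({a, b} : Set P) a :=
  ⟨by rintro c (rfl | rfl) <;> simp [h], fun c hc => hc (by simp)⟩

private lemma isGLB_pair_left_s12 {P : Type*} [PartialOrder P] {a b : P} (h : b ≤ a) :
    IsGLB ({a, b} : Set P) b :=
  ⟨by rintro c (rfl | rfl) <;> simp [h], fun c hc => hc (by simp)⟩

private lemma isGLB_pair_right_s12 {P : Type*} [PartialOrder P] {a b : P} (h : a ≤ b) :
    IsGLB ({a, b} : Set P) a :=
  ⟨by rintro c (rfl | rfl) <;> simp [h], fun c hc => hc (by simp)⟩

/-- Every block of a tolerance on a poset is convex. -/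
theorem stmt_12 {P : Type*} [PartialOrder P] (T : P → P → Prop)
    (hT : PosetTolerance T) (B : Set P) (hB : IsBlock T B)
    (x y z : P) (hx : x ∈ B) (hz : z ∈ B) (hxy : x ≤ y) (hyz : y ≤ z) :
    y ∈ B := by
  obtain ⟨hrefl, hsymm, hjoin, hmeet, h3, h4⟩ := hT
  -- key claim: T y b for all b ∈ B
  have key : ∀ b ∈ B, T y b := by
    intro b hb
    by_cases htot : ∃ a c : P, ¬ T a c
    · -- use condition (4) on T x z
      obtain ⟨z0, u0, hTz0u0, hz0x, hz0z, hxu0, hzu0, hC0⟩ := h4 htot (hB.1 x hx z hz)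
      have hbz0u0 : T b z0 ∧ T b u0 := hC0 b (hB.1 b hb x hx) (hB.1 b hb z hz)
      -- use condition (4) on T b u0
      obtain ⟨z1, u1, hTz1u1, hz1b, hz1u0, hbu1, hu0u1, hC1⟩ := h4 htot hbz0u0.2
      have hz0bu : T z0 z1 ∧ T z0 u1 := hC1 z0 (hsymm _ _ hbz0u0.1) hTz0u0
      -- sandwich: T y u1
      have hz0y : z0 ≤ y := le_trans hz0x hxy
      have hyu1 : y ≤ u1 := le_trans (le_trans hyz hzu0) hu0u1
      have hTyu1 : T y u1 :=
        hjoin hz0bu.2 (hrefl y) (isLUB_pair_left_s12 hz0y) (isLUB_pair_right_s12 hyu1)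
      have hTbu1 : T b u1 := (hC1 b (hrefl b) hbz0u0.2).2
      exact hmeet (hsymm _ _ hTbu1) hTyu1 (isGLB_pair_left_s12 hyu1)
        (isGLB_pair_right_s12 hbu1)
    · push_neg at htot
      exact htot y b
  have hsub : B ⊆ insert y B := Set.subset_insert _ _
  have hC : ∀ a ∈ insert y B, ∀ c ∈ insert y B, T a c := by
    intro a ha c hc
    rcases Set.mem_insert_iff.mp ha with h1 | h1 <;>
      rcases Set.mem_insert_iff.mp hc with h2 | h2
    · exact h1 ▸ h2 ▸ hrefl y
    · exact h1 ▸ key c h2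
    · exact h2 ▸ hsymm _ _ (key a h1)
    · exact hB.1 a h1 c h2
  have := hB.2 (insert y B) hsub hC
  rw [← this]
  exact Set.mem_insert _ _
end
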